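/- arXiv:1709.00617 — 2 statements merged into one kernel-verified Lean document; each statement's English description precedes it below -/
import Mathlib

section
/- Let t ≥ 2 be an integer. The number of (t, t+1)-core partitions with distinct parts whose size is maximal among all (t, t+1)-core partitions with distinct parts equals 2 if t ≡ 1 (mod 3) and equals 1 otherwise. -/
/-- A partition: a finite weakly decreasing list of positive integers. -/
structure Partn where
  parts : List ℕ
  pos : ∀ p ∈ parts, 0 < p
  sorted : parts.Pairwise (· ≥ ·)

namespace Partn

/-- The size of a partition: the sum of its parts. -/
def size (l : Partn) : ℕ := l.parts.sum

/-- The number of rows `k` (0-indexed) with `λ_k ≥ j` (the length of column `j`). -/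
def colLen (l : Partn) (j : ℕ) : ℕ := (l.parts.filter (fun p => j ≤ p)).length

/-- The hook length of the box in row `i` (0-indexed) and column `j` (1-indexed):
`λ_i − j + #{k : λ_k ≥ j} − i + 1` (with 1-indexed rows). -/
def hook (l : Partn) (i j : ℕ) : ℕ :=
  (l.parts.getD i 0 - j) + (l.colLen j - (i + 1)) + 1

/-- A partition is a `t`-core if none of its hook lengths is divisible by `t`. -/
def IsCore (t : ℕ) (l : Partn) : Prop :=
  ∀ i j : ℕ, i < l.parts.length → 1 ≤ j → j ≤ l.parts.getD i 0 → ¬ (t ∣ l.hook i j)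

/-- A partition has distinct parts if its parts are strictly decreasing. -/
def DistinctParts (l : Partn) : Prop := l.parts.Pairwise (· > ·)

/-- The β-set of a partition: `{λ_i + ℓ − i : 1 ≤ i ≤ ℓ}` (1-indexed). -/
def betaSet (l : Partn) : Finset ℕ :=
  (Finset.range l.parts.length).image
    (fun i => l.parts.getD i 0 + (l.parts.length - 1 - i))

/-- `nFn t i l` is the number of elements of the β-set of `l` congruent to `i` mod `t`. -/
def nFn (t i : ℕ) (l : Partn) : ℕ :=
  (l.betaSet.filter (fun x => x % t = i)).card

end Partn

/-!
If `λ` has distinct parts, then along its first row, read from right to left, the hook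
lengths grow from `1` to `λ₁ + ℓ - 1` in steps of `1` or `2`, so they cannot jump over both
`t` and `t + 1`. Hence `λ` is a `(t, t+1)`-core iff `λ₁ + ℓ ≤ t`, and among those with `ℓ`
parts the staircase `(t - ℓ, t - ℓ - 1, …, t - 2ℓ + 1)` is the unique largest, of size
`ℓ(2t + 1 - 3ℓ)/2`. This quadratic in `ℓ` is maximal at the integers nearest to `(2t + 1)/6`,
and there are two of them exactly when `t ≡ 1 (mod 3)`.
-/

open Finset

theorem Nat.exists_eq_or_eq_succ_of_step_le_two {f : ℕ → ℕ} {a n : ℕ} (h0 : f 0 ≤ a)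
    (hn : a ≤ f n) (hstep : ∀ i < n, f (i + 1) ≤ f i + 2) :
    ∃ i ≤ n, f i = a ∨ f i = a + 1 := by
  induction n with
  | zero => exact ⟨0, le_rfl, .inl (le_antisymm h0 hn)⟩
  | succ n ih =>
    by_cases hfn : a ≤ f n
    · obtain ⟨i, hi, hfi⟩ := ih hfn fun i hi => hstep i (by omega)
      exact ⟨i, by omega, hfi⟩
    · have := hstep n (by omega)
      exact ⟨n + 1, le_rfl, by omega⟩

theorem List.length_filter_le_length_filter_succ_add_one {L : List ℕ} (hL : L.Nodup) (j : ℕ) :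
    (L.filter (j ≤ ·)).length ≤ (L.filter (j + 1 ≤ ·)).length + 1 := by
  simp only [← List.countP_eq_length_filter]
  rw [List.countP_eq_countP_filter_add L _ (· == j)]
  have hcount : (L.filter (· == j)).countP (j ≤ ·) ≤ 1 :=
    (List.countP_le_length).trans ((List.count_eq_length_filter).symm.trans_le
      (List.nodup_iff_count_le_one.mp hL j))
  have hrest : (L.filter fun a => !(a == j)).countP (j ≤ ·) ≤ L.countP (j + 1 ≤ ·) := by
    rw [List.countP_filter]
    refine List.countP_mono_left fun x _ hx => ?_
    simp only [Bool.and_eq_true, decide_eq_true_eq, Bool.not_eq_true', beq_eq_false_iff_ne]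
      at hx ⊢
    omega
  omega

theorem Int.mul_three_mul_add_nonneg {d c : ℤ} (hc : -1 ≤ c) (hc' : c ≤ 3) :
    0 ≤ d * (3 * d + c) := by
  rcases le_or_gt 0 d with hd | hd
  · rcases hd.eq_or_lt with rfl | hd
    · simp
    · exact mul_nonneg hd.le (by omega)
  · exact mul_nonneg_of_nonpos_of_nonpos hd.le (by omega)

theorem Int.mul_three_mul_add_eq_zero_iff {d c : ℤ} (hc : -1 ≤ c) (hc' : c ≤ 3) :
    d * (3 * d + c) = 0 ↔ d = 0 ∨ c = 3 ∧ d = -1 := by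
  constructor
  · intro h
    rcases mul_eq_zero.mp h with h | h <;> omega
  · rintro (rfl | ⟨rfl, rfl⟩) <;> norm_num

namespace Partn

section

variable (l : Partn)

theorem parts_injective : Function.Injective Partn.parts := by
  rintro ⟨_, _, _⟩ ⟨_, _, _⟩ h
  cases h
  rfl

theorem le_head_of_mem {p : ℕ} (hp : p ∈ l.parts) : p ≤ l.parts.getD 0 0 := by
  obtain ⟨i, hi, rfl⟩ := List.getElem_of_mem hp
  rw [List.getD_eq_getElem _ _ (by omega)]
  rcases Nat.eq_zero_or_pos i with rfl | hi0
  · rfl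
  · exact List.pairwise_iff_getElem.mp l.sorted 0 i _ hi hi0

theorem getD_le_head (i : ℕ) : l.parts.getD i 0 ≤ l.parts.getD 0 0 := by
  rcases lt_or_ge i l.parts.length with hi | hi
  · exact l.le_head_of_mem (List.getD_eq_getElem _ _ hi ▸ List.getElem_mem hi)
  · rw [List.getD_eq_default _ _ hi]
    exact Nat.zero_le _

theorem one_le_getD {i : ℕ} (hi : i < l.parts.length) : 1 ≤ l.parts.getD i 0 :=
  l.pos _ (List.getD_eq_getElem _ _ hi ▸ List.getElem_mem hi)

theorem colLen_le_length (j : ℕ) : l.colLen j ≤ l.parts.length :=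
  List.length_filter_le _ _

theorem colLen_one : l.colLen 1 = l.parts.length := by
  rw [colLen, List.filter_eq_self.mpr fun p hp => decide_eq_true (p := 1 ≤ p) (l.pos p hp)]

theorem colLen_eq_zero {j : ℕ} (hj : l.parts.getD 0 0 < j) : l.colLen j = 0 := by
  rw [colLen, List.length_eq_zero_iff, List.filter_eq_nil_iff]
  intro p hp
  have := l.le_head_of_mem hp
  simp only [decide_eq_true_eq]
  omega

theorem one_le_colLen {j : ℕ} (hl : 0 < l.parts.length) (hj : j ≤ l.parts.getD 0 0) :
    1 ≤ l.colLen j := by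
  rw [colLen, ← List.countP_eq_length_filter, List.one_le_countP_iff]
  exact ⟨_, List.getD_eq_getElem _ _ hl ▸ List.getElem_mem hl, by simpa using hj⟩

theorem hook_lt_head_add_length {i j : ℕ} (hi : i < l.parts.length) (hj : 1 ≤ j) :
    l.hook i j < l.parts.getD 0 0 + l.parts.length := by
  have := l.getD_le_head i
  have := l.one_le_getD hi
  have := l.colLen_le_length j
  unfold hook
  omega

theorem isCore_of_head_add_length_le {s : ℕ} (h : l.parts.getD 0 0 + l.parts.length ≤ s) :
    l.IsCore s := fun i j hi hj _ hdvd =>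
  have := l.hook_lt_head_add_length hi hj
  (Nat.le_of_dvd (by unfold hook; omega) hdvd).not_gt (by omega)

theorem hook_zero {j : ℕ} (hl : 0 < l.parts.length) (hj : j ≤ l.parts.getD 0 0) :
    l.hook 0 j = l.parts.getD 0 0 + l.colLen j - j := by
  have := l.one_le_colLen hl hj
  unfold hook
  omega

end

theorem DistinctParts.colLen_le_colLen_succ_add_one {l : Partn} (hd : l.DistinctParts)
    (j : ℕ) : l.colLen j ≤ l.colLen (j + 1) + 1 :=
  List.length_filter_le_length_filter_succ_add_one
    (List.nodup_iff_pairwise_ne.mpr (hd.imp ne_of_gt)) j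

theorem DistinctParts.head_add_length_le {l : Partn} (hd : l.DistinctParts) {t : ℕ}
    (ht : 1 ≤ t) (hct : l.IsCore t) (hct' : l.IsCore (t + 1)) :
    l.parts.getD 0 0 + l.parts.length ≤ t := by
  by_contra! hlt
  obtain ⟨a, ha_def⟩ : ∃ a, l.parts.getD 0 0 = a := ⟨_, rfl⟩
  have hl : 0 < l.parts.length :=
    Nat.pos_of_ne_zero fun h => by simp [List.length_eq_zero_iff.mp h] at hlt
  have ha : 1 ≤ a := ha_def ▸ l.one_le_getD hl
  have hstep (j : ℕ) (hj : 1 ≤ j) (hja : j + 1 ≤ a) :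
      l.hook 0 j ≤ l.hook 0 (j + 1) + 2 := by
    rw [l.hook_zero hl (by omega), l.hook_zero hl (by omega)]
    have := hd.colLen_le_colLen_succ_add_one j
    omega
  have hfirst : l.hook 0 a ≤ t := by
    rw [l.hook_zero (j := a) hl ha_def.ge]
    have := hd.colLen_le_colLen_succ_add_one a
    have := l.colLen_eq_zero (j := a + 1) (by omega)
    omega
  have hlast : t ≤ l.hook 0 (a - (a - 1)) := by
    rw [show a - (a - 1) = 1 by omega, l.hook_zero hl (by omega), colLen_one]
    omega
  obtain ⟨i, hi, hfi⟩ := Nat.exists_eq_or_eq_succ_of_step_le_two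
    (f := fun i => l.hook 0 (a - i)) (by simpa using hfirst) hlast fun i hi => by
      rw [show a - i = a - (i + 1) + 1 by omega]
      exact hstep (a - (i + 1)) (by omega) (by omega)
  rcases hfi with hfi | hfi
  · exact hct 0 (a - i) hl (by omega) (by omega) (hfi ▸ dvd_refl t)
  · exact hct' 0 (a - i) hl (by omega) (by omega) (hfi ▸ dvd_refl (t + 1))

theorem DistinctParts.getD_add_le_head {l : Partn} (hd : l.DistinctParts) {i : ℕ}
    (hi : i < l.parts.length) : l.parts.getD i 0 + i ≤ l.parts.getD 0 0 := by
  induction i with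
  | zero => rfl
  | succ i ih =>
    have hlt : l.parts.getD (i + 1) 0 < l.parts.getD i 0 := by
      rw [List.getD_eq_getElem _ _ hi, List.getD_eq_getElem _ _ (by omega)]
      exact List.pairwise_iff_getElem.mp hd i (i + 1) _ hi (Nat.lt_succ_self i)
    have := ih (by omega)
    omega

theorem DistinctParts.two_mul_length_le {l : Partn} (hd : l.DistinctParts) {t : ℕ}
    (hb : l.parts.getD 0 0 + l.parts.length ≤ t) : 2 * l.parts.length ≤ t := by
  rcases Nat.eq_zero_or_pos l.parts.length with h | h
  · omega
  · have := hd.getD_add_le_head (Nat.sub_lt h one_pos)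
    have := l.one_le_getD (Nat.sub_lt h one_pos)
    omega

theorem size_eq_sum_getD (l : Partn) :
    l.size = ∑ i ∈ range l.parts.length, l.parts.getD i 0 := by
  rw [size, Finset.sum_range, ← List.sum_ofFn]
  exact congrArg List.sum (List.ext_getElem (by simp) (by simp))

theorem size_le_size_of_getD_le {l m : Partn} (hlen : l.parts.length = m.parts.length)
    (hle : ∀ i < l.parts.length, l.parts.getD i 0 ≤ m.parts.getD i 0) : l.size ≤ m.size := by
  rw [size_eq_sum_getD, size_eq_sum_getD, ← hlen]
  exact sum_le_sum fun i hi => hle i (mem_range.mp hi)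

theorem eq_of_getD_le_of_size_le {l m : Partn} (hlen : l.parts.length = m.parts.length)
    (hle : ∀ i < l.parts.length, l.parts.getD i 0 ≤ m.parts.getD i 0)
    (hsize : m.size ≤ l.size) : l = m := by
  rw [size_eq_sum_getD, size_eq_sum_getD, ← hlen] at hsize
  have heq := (sum_eq_sum_iff_of_le fun i hi => hle i (mem_range.mp hi)).mp
    (le_antisymm (sum_le_sum fun i hi => hle i (mem_range.mp hi)) hsize)
  refine parts_injective (List.ext_getElem hlen fun i hl hm => ?_)
  have := heq i (mem_range.mpr hl)
  rwa [List.getD_eq_getElem _ _ hl, List.getD_eq_getElem _ _ hm] at this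

def stair (n k : ℕ) : Partn where
  parts := (List.range n).map (fun i => n + k - i)
  pos := by
    simp only [List.mem_map, List.mem_range]
    rintro _ ⟨i, hi, rfl⟩
    omega
  sorted := by
    rw [List.pairwise_map]
    exact List.pairwise_lt_range.imp_of_mem fun _ hb hab => by
      simp only [List.mem_range] at hb
      omega

@[simp]
theorem stair_length (n k : ℕ) : (stair n k).parts.length = n := by
  simp [stair]

theorem eq_of_stair_eq {m n k k' : ℕ} (h : stair m k = stair n k') : m = n := by
  simpa using congrArg (·.parts.length) h

theorem stair_getD {n k i : ℕ} (hi : i < n) : (stair n k).parts.getD i 0 = n + k - i := by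
  rw [List.getD_eq_getElem _ _ (by simpa using hi)]
  simp [stair]

theorem stair_distinctParts (n k : ℕ) : (stair n k).DistinctParts := by
  unfold DistinctParts stair
  rw [List.pairwise_map]
  exact List.pairwise_lt_range.imp_of_mem fun _ hb hab => by
    simp only [List.mem_range] at hb
    omega

theorem stair_succ_parts (n k : ℕ) :
    (stair (n + 1) k).parts = (n + k + 1) :: (stair n k).parts := by
  simp only [stair, List.range_succ_eq_map, List.map_cons, List.map_map]
  congr 1
  · omega
  · exact List.map_congr_left fun i _ => by simp only [Function.comp_apply]; omega

theorem two_mul_size_stair (n k : ℕ) : 2 * (stair n k).size = n * (n + 1 + 2 * k) := by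
  induction n with
  | zero => simp [stair, size]
  | succ n ih =>
    rw [size, stair_succ_parts, List.sum_cons, mul_add, ← size, ih]
    ring

theorem stair_head_add_length_le (n k : ℕ) : (stair n k).parts.getD 0 0 + n ≤ 2 * n + k := by
  cases n with
  | zero => simp [stair]
  | succ n => simp only [stair_succ_parts, List.getD_cons_zero]; omega

def IsDistinctCore (t : ℕ) (l : Partn) : Prop :=
  l.IsCore t ∧ l.IsCore (t + 1) ∧ l.DistinctParts

theorem isDistinctCore_iff {t : ℕ} (ht : 1 ≤ t) {l : Partn} :
    IsDistinctCore t l ↔ l.DistinctParts ∧ l.parts.getD 0 0 + l.parts.length ≤ t :=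
  ⟨fun ⟨hct, hct', hd⟩ => ⟨hd, hd.head_add_length_le ht hct hct'⟩, fun ⟨hd, hb⟩ =>
    ⟨l.isCore_of_head_add_length_le hb, l.isCore_of_head_add_length_le (by omega), hd⟩⟩

theorem isDistinctCore_stair {t n : ℕ} (hn : 2 * n ≤ t) :
    IsDistinctCore t (stair n (t - 2 * n)) :=
  have hb := stair_head_add_length_le n (t - 2 * n)
  ⟨isCore_of_head_add_length_le _ (by simp only [stair_length]; omega),
    isCore_of_head_add_length_le _ (by simp only [stair_length]; omega), stair_distinctParts _ _⟩

theorem DistinctParts.getD_le_stair {l : Partn} (hd : l.DistinctParts) {t : ℕ}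
    (hb : l.parts.getD 0 0 + l.parts.length ≤ t) {i : ℕ} (hi : i < l.parts.length) :
    l.parts.getD i 0 ≤ (stair l.parts.length (t - 2 * l.parts.length)).parts.getD i 0 := by
  rw [stair_getD hi]
  have := hd.getD_add_le_head hi
  have := hd.two_mul_length_le hb
  omega

def maxStairLengths (t : ℕ) : Set ℕ :=
  {n | 2 * n ≤ t ∧
    ∀ m, 2 * m ≤ t → (stair m (t - 2 * m)).size ≤ (stair n (t - 2 * n)).size}

theorem setOf_maxSize_isDistinctCore_eq_image_stair {t : ℕ} (ht : 1 ≤ t) :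
    {l : Partn | IsDistinctCore t l ∧ ∀ m, IsDistinctCore t m → m.size ≤ l.size} =
      (fun n => stair n (t - 2 * n)) '' maxStairLengths t := by
  ext l
  constructor
  · rintro ⟨hl, hmax⟩
    obtain ⟨hd, hb⟩ := (isDistinctCore_iff ht).mp hl
    have hlen := (stair_length l.parts.length (t - 2 * l.parts.length)).symm
    have hle := size_le_size_of_getD_le hlen fun i => hd.getD_le_stair hb
    refine ⟨l.parts.length, ⟨hd.two_mul_length_le hb, fun m hm => ?_⟩, ?_⟩
    · exact (hmax _ (isDistinctCore_stair hm)).trans hle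
    · exact (eq_of_getD_le_of_size_le hlen (fun i => hd.getD_le_stair hb)
        (hmax _ (isDistinctCore_stair (hd.two_mul_length_le hb)))).symm
  · rintro ⟨n, ⟨hn, hmax⟩, rfl⟩
    refine ⟨isDistinctCore_stair hn, fun m hm => ?_⟩
    obtain ⟨hd, hb⟩ := (isDistinctCore_iff ht).mp hm
    exact (size_le_size_of_getD_le (stair_length _ _).symm fun i => hd.getD_le_stair hb).trans
      (hmax _ (hd.two_mul_length_le hb))

theorem two_mul_size_stair_sub {t n : ℕ} (hn : 2 * n ≤ t) :
    (2 * (stair n (t - 2 * n)).size : ℤ) = n * (2 * t + 1 - 3 * n) := by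
  have := two_mul_size_stair n (t - 2 * n)
  zify [hn] at this
  linear_combination this

theorem maxStairLengths_eq {t : ℕ} (ht : 2 ≤ t) :
    maxStairLengths t = if t % 3 = 1 then {t / 3, t / 3 + 1} else {(t + 1) / 3} := by
  set n₀ := (t + 1) / 3
  have hn₀ : 2 * n₀ ≤ t := by omega
  have hc : -1 ≤ (2 * t + 1 - 6 * n₀ : ℤ) ∧ (2 * t + 1 - 6 * n₀ : ℤ) ≤ 3 := by omega
  -- `2t + 1 - 6n₀ ∈ {-1, 1, 3}`; it is `3`, so that `n₀ + 1` ties with `n₀`, iff `t ≡ 1 (mod 3)`.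
  have hdiff {m : ℕ} (hm : 2 * m ≤ t) :
      (2 * (stair n₀ (t - 2 * n₀)).size - 2 * (stair m (t - 2 * m)).size : ℤ) =
        (n₀ - m) * (3 * (n₀ - m) + (2 * t + 1 - 6 * n₀)) := by
    rw [two_mul_size_stair_sub hn₀, two_mul_size_stair_sub hm]
    ring
  have hle₀ {m : ℕ} (hm : 2 * m ≤ t) :
      (stair m (t - 2 * m)).size ≤ (stair n₀ (t - 2 * n₀)).size := by
    have := Int.mul_three_mul_add_nonneg (d := n₀ - m) hc.1 hc.2
    have := hdiff hm
    omega
  have heq₀ {n : ℕ} (hn : 2 * n ≤ t) :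
      (stair n (t - 2 * n)).size = (stair n₀ (t - 2 * n₀)).size ↔
        n = n₀ ∨ t % 3 = 1 ∧ n = n₀ + 1 := by
    have := hdiff hn
    have := Int.mul_three_mul_add_eq_zero_iff (d := n₀ - n) hc.1 hc.2
    omega
  ext n
  have hmem : n ∈ maxStairLengths t ↔ n = n₀ ∨ t % 3 = 1 ∧ n = n₀ + 1 := by
    constructor
    · rintro ⟨hn, hmax⟩
      exact (heq₀ hn).mp (le_antisymm (hle₀ hn) (hmax n₀ hn₀))
    · intro h
      have hn : 2 * n ≤ t := by omega
      exact ⟨hn, fun m hm => (hle₀ hm).trans ((heq₀ hn).mpr h).ge⟩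
  rw [hmem]
  split_ifs <;> simp only [Set.mem_insert_iff, Set.mem_singleton_iff] <;> omega

end Partn

/-- The number of `(t, t+1)`-core partitions with distinct parts of maximal size. -/
theorem num_largest_t_t_add_one (t : ℕ) (ht : 2 ≤ t) :
    {lam : Partn | (lam.IsCore t ∧ lam.IsCore (t + 1) ∧ lam.DistinctParts) ∧
        ∀ mu : Partn, (mu.IsCore t ∧ mu.IsCore (t + 1) ∧ mu.DistinctParts) →
          mu.size ≤ lam.size}.ncard
      = if t % 3 = 1 then 2 else 1 := by
  have hinj : Function.Injective fun n => Partn.stair n (t - 2 * n) :=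
    fun _ _ h => Partn.eq_of_stair_eq h
  calc _ = ((fun n => Partn.stair n (t - 2 * n)) '' _).ncard :=
        congrArg Set.ncard (Partn.setOf_maxSize_isDistinctCore_eq_image_stair (by omega))
    _ = _ := by
      rw [Set.ncard_image_of_injective _ hinj, Partn.maxStairLengths_eq ht]
      split_ifs
      · exact Set.ncard_pair (by omega)
      · exact Set.ncard_singleton _
end

section
/- Let t ≥ 2 and m ≥ 2 be integers. The number of (t, mt−1)-core partitions with distinct parts whose size is maximal among all (t, mt−1)-core partitions with distinct parts is at most 2. -/
/-!
A partition with distinct parts is determined by its β-set `B` of first-column hook lengths, which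
has no two consecutive elements; it is a `t`-core iff `B` is closed under `x ↦ x - t` (for `x ≥ t`),
and for such `B` being an `(mt - 1)`-core means `B ⊆ [1, mt - 2]`. The size is
`∑ B - |B|(|B| - 1)/2`. So `B` is a union of residue stacks `r, r + t, r + 2t, …` with no two
neighbouring residues occupied, and the size can be increased unless

* every occupied residue class is full (adding its next element or removing its top one changes
  twice the size by amounts summing to `2t - 2 > 0`), and
* with `r` occupied and `r + 3 ≤ t`, also `r + 2` is occupied (else moving class `r` up by one
  helps).

Hence the occupied residues are `σ, σ + 2, …` up to `t - 2` or `t - 1`, and comparing the values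
shows that an optimal `B` with `k` occupied classes is unique and has twice its size equal to the
quadratic `m k (t (m + 1) - k (m + 2) - 1)` in `k`. A quadratic takes its maximum at most twice.
-/

open Finset

lemma List.sum_eq_sum_range_getD (l : List ℕ) :
    l.sum = ∑ i ∈ Finset.range l.length, l.getD i 0 := by
  induction l with
  | nil => simp
  | cons a l ih => simp [Finset.sum_range_succ', ih, add_comm]

lemma List.length_filter_eq_card (l : List ℕ) (p : ℕ → Bool) :
    (l.filter p).length = #{i ∈ Finset.range l.length | p (l.getD i 0)} := by
  induction l with
  | nil => simp
  | cons a l ih =>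
    rw [List.filter_cons, List.length_cons, Finset.card_filter, Finset.sum_range_succ',
      ← Finset.card_filter]
    by_cases h : p a <;> simp [h, ih]

/-! ### Sets of natural numbers closed under subtracting `t` -/

lemma mod_eq_of_eq_add_mul {x r t q : ℕ} (h : x = r + t * q) (hr : r < t) : x % t = r := by
  rw [h, Nat.add_mul_mod_self_left, Nat.mod_eq_of_lt hr]

section SubClosed

variable {t : ℕ} {B : Finset ℕ}

lemma sub_mul_mem_of_sub_mem (hB : ∀ x ∈ B, t ≤ x → x - t ∈ B) {x : ℕ} (hx : x ∈ B) :
    ∀ k, t * k ≤ x → x - t * k ∈ B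
  | 0, _ => by simpa
  | k + 1, h => by
    rw [Nat.mul_succ] at h ⊢
    rw [← Nat.sub_sub]
    exact hB _ (sub_mul_mem_of_sub_mem hB hx k (by omega)) (by omega)

lemma mod_mem_of_sub_mem (hB : ∀ x ∈ B, t ≤ x → x - t ∈ B) {x : ℕ} (hx : x ∈ B) : x % t ∈ B := by
  have h := Nat.div_add_mod x t
  have := sub_mul_mem_of_sub_mem hB hx (x / t) (by omega)
  rwa [show x - t * (x / t) = x % t by omega] at this

/-- Otherwise both `y = x - (mt - 1) ≥ 1` and `x - t(m - 1) - t = y - 1` lie in `B`. -/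
lemma le_sub_two_of_sub_mem {m : ℕ} (ht : 0 < t) (hm : 0 < m) (h0 : 0 ∉ B)
    (hB : ∀ x ∈ B, x + 1 ∉ B) (hsub : ∀ x ∈ B, t ≤ x → x - t ∈ B)
    (hsub' : ∀ x ∈ B, m * t - 1 ≤ x → x - (m * t - 1) ∈ B) {x : ℕ} (hx : x ∈ B) :
    x ≤ m * t - 2 := by
  by_contra hlt
  have hmt : t * (m - 1) + t = m * t := by
    rw [Nat.mul_sub_one, mul_comm m t, Nat.sub_add_cancel (Nat.le_mul_of_pos_right t hm)]
  have hy := hsub' x hx (by omega)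
  have hy0 : x - (m * t - 1) ≠ 0 := fun h => h0 (h ▸ hy)
  have hz := hsub _ (sub_mul_mem_of_sub_mem hsub hx (m - 1) (by omega)) (by omega)
  exact hB _ hz (by rwa [show x - t * (m - 1) - t + 1 = x - (m * t - 1) by omega])

end SubClosed

lemma succ_mod_notMem {t : ℕ} {R : Finset ℕ} (h0 : 0 ∉ R) (hR : ∀ r ∈ R, r + 1 ∉ R) {x : ℕ}
    (hx : x % t ∈ R) : (x + 1) % t ∉ R := by
  rcases Nat.eq_zero_or_pos t with rfl | ht
  · simpa using hR _ hx
  have hx' := (Nat.mod_add_div x t).symm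
  have hlt := Nat.mod_lt x ht
  rcases Nat.lt_or_ge (x % t + 1) t with h | h
  · rw [mod_eq_of_eq_add_mul (q := x / t) (by omega) h]
    exact hR _ hx
  · rw [mod_eq_of_eq_add_mul (r := 0) (q := x / t + 1) (by rw [Nat.mul_succ]; omega) ht]
    exact h0

lemma add_one_le_of_mod_add_three_le {t m x : ℕ} (hm : 0 < m) (hx : x ≤ m * t - 2)
    (hr : x % t + 3 ≤ t) : x + 1 ≤ m * t - 2 := by
  have hdiv := Nat.mod_add_div x t
  rw [mul_comm m t] at hx ⊢
  rcases le_or_gt m (x / t) with h | h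
  · have := Nat.mul_le_mul_left t h
    have := Nat.le_mul_of_pos_right t hm
    omega
  · have h₁ := Nat.mul_le_mul_left t (Nat.le_sub_one_of_lt h)
    have := Nat.le_mul_of_pos_right t hm
    rw [Nat.mul_sub_one] at h₁
    omega

/-! ### β-sets of `(t, mt - 1)`-cores with distinct parts -/

/-- The β-sets of the `(t, mt - 1)`-cores with distinct parts (`Partn.admissible_betaSet_iff`). -/
structure Admissible (t m : ℕ) (B : Finset ℕ) : Prop where
  pos : ∀ x ∈ B, 0 < x
  le : ∀ x ∈ B, x ≤ m * t - 2
  succ_notMem : ∀ x ∈ B, x + 1 ∉ B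
  sub_mem : ∀ x ∈ B, t ≤ x → x - t ∈ B

/-- Twice the size of the partition with β-set `B` (`Partn.twiceSize_betaSet`). -/
def twiceSize (B : Finset ℕ) : ℤ := 2 * ∑ x ∈ B, (x : ℤ) - #B * (#B - 1 : ℤ)

def IsOptimal (t m : ℕ) (B : Finset ℕ) : Prop :=
  Admissible t m B ∧ ∀ B', Admissible t m B' → twiceSize B' ≤ twiceSize B

lemma twiceSize_insert {B : Finset ℕ} {x : ℕ} (hx : x ∉ B) :
    twiceSize (insert x B) = twiceSize B + 2 * x - 2 * #B := by
  rw [twiceSize, twiceSize, sum_insert hx, card_insert_of_notMem hx]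
  push_cast
  ring

lemma twiceSize_erase {B : Finset ℕ} {x : ℕ} (hx : x ∈ B) :
    twiceSize (B.erase x) = twiceSize B - 2 * x + 2 * (#B - 1 : ℤ) := by
  have h := twiceSize_insert (notMem_erase x B)
  rw [insert_erase hx, card_erase_of_mem hx, Nat.cast_sub (card_pos.2 ⟨x, hx⟩)] at h
  push_cast at h
  linarith

lemma twiceSize_union {X Y : Finset ℕ} (h : Disjoint X Y) :
    twiceSize (X ∪ Y) = twiceSize X + twiceSize Y - 2 * #X * #Y := by
  rw [twiceSize, twiceSize, twiceSize, sum_union h, card_union_of_disjoint h]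
  push_cast
  ring

namespace Admissible

variable {t m : ℕ} {B : Finset ℕ}

lemma zero_notMem (hB : Admissible t m B) : 0 ∉ B := fun h => (hB.pos 0 h).false

lemma mod_mem (hB : Admissible t m B) {x : ℕ} (hx : x ∈ B) : x % t ∈ B :=
  mod_mem_of_sub_mem hB.sub_mem hx

end Admissible

/-! ### Partitions and their β-sets -/

namespace Partn

variable (l : Partn)

def len : ℕ := l.parts.length

def part (i : ℕ) : ℕ := l.parts.getD i 0

def beta (i : ℕ) : ℕ := l.part i + (l.len - 1 - i)

variable {l}

lemma part_pos {i : ℕ} (hi : i < l.len) : 0 < l.part i := by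
  rw [part, List.getD_eq_getElem _ _ hi]
  exact l.pos _ (List.getElem_mem _)

lemma part_le_part {i j : ℕ} (hij : i ≤ j) (hj : j < l.len) : l.part j ≤ l.part i := by
  rcases hij.eq_or_lt with rfl | hij
  · rfl
  rw [part, part, List.getD_eq_getElem _ _ hj, List.getD_eq_getElem _ _ (hij.trans hj)]
  exact List.pairwise_iff_getElem.1 l.sorted _ _ _ _ hij

lemma part_lt_part (hd : l.DistinctParts) {i j : ℕ} (hij : i < j) (hj : j < l.len) :
    l.part j < l.part i := by
  rw [part, part, List.getD_eq_getElem _ _ hj, List.getD_eq_getElem _ _ (hij.trans hj)]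
  exact List.pairwise_iff_getElem.1 hd _ _ _ _ hij

lemma beta_lt_beta {i j : ℕ} (hij : i < j) (hj : j < l.len) : l.beta j < l.beta i := by
  have := part_le_part hij.le hj
  unfold beta
  omega

lemma beta_add_two_le (hd : l.DistinctParts) {i j : ℕ} (hij : i < j) (hj : j < l.len) :
    l.beta j + 2 ≤ l.beta i := by
  have h₁ := part_lt_part hd (show i < i + 1 by omega) (show i + 1 < l.len by omega)
  have h₂ := part_le_part (show i + 1 ≤ j by omega) hj
  unfold beta
  omega

lemma mem_betaSet {x : ℕ} : x ∈ l.betaSet ↔ ∃ i < l.len, l.beta i = x := by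
  simp [betaSet, beta, part, len]

lemma beta_mem_betaSet {i : ℕ} (hi : i < l.len) : l.beta i ∈ l.betaSet :=
  mem_betaSet.2 ⟨i, hi, rfl⟩

lemma beta_injOn : Set.InjOn l.beta (range l.len) := by
  intro i hi j hj hij
  simp only [coe_range, Set.mem_Iio] at hi hj
  by_contra hne
  rcases Nat.lt_or_gt_of_ne hne with h | h
  · exact (beta_lt_beta h hj).ne' hij
  · exact (beta_lt_beta h hi).ne hij

lemma card_betaSet : #l.betaSet = l.len := by
  rw [show l.betaSet = (range l.len).image l.beta from rfl, card_image_of_injOn beta_injOn,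
    card_range]

lemma twiceSize_betaSet : twiceSize l.betaSet = 2 * l.size := by
  have hsum : ∑ x ∈ l.betaSet, x = l.size + ∑ i ∈ range l.len, i := by
    rw [show l.betaSet = (range l.len).image l.beta from rfl, sum_image beta_injOn]
    simp only [beta, sum_add_distrib, size, List.sum_eq_sum_range_getD, part, len]
    congr 1
    simpa using sum_range_reflect (fun i => i) l.parts.length
  have hnat : 2 * ∑ x ∈ l.betaSet, x = 2 * l.size + l.len * (l.len - 1) := by
    rw [hsum, ← sum_range_id_mul_two]
    ring
  have hcast := congrArg (Nat.cast : ℕ → ℤ) hnat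
  rw [twiceSize, card_betaSet]
  rcases Nat.eq_zero_or_pos l.len with h | h
  · rw [h] at hcast ⊢
    push_cast at hcast ⊢
    linarith
  · push_cast [Nat.cast_sub h] at hcast
    linarith

lemma zero_notMem_betaSet : 0 ∉ l.betaSet := by
  rw [mem_betaSet]
  rintro ⟨i, hi, h⟩
  have := part_pos hi
  unfold beta at h
  omega

lemma succ_notMem_betaSet (hd : l.DistinctParts) {x : ℕ} (hx : x ∈ l.betaSet) :
    x + 1 ∉ l.betaSet := by
  obtain ⟨i, hi, rfl⟩ := mem_betaSet.1 hx
  rw [mem_betaSet]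
  rintro ⟨k, hk, hki⟩
  rcases lt_trichotomy k i with h | rfl | h
  · have := beta_add_two_le hd h hi
    omega
  · omega
  · have := beta_lt_beta h hk
    omega

lemma sort_betaSet : l.betaSet.sort (· ≥ ·) = List.ofFn (fun i : Fin l.len => l.beta i) := by
  have hsorted : (List.ofFn (fun i : Fin l.len => l.beta i)).Pairwise (· > ·) :=
    List.pairwise_ofFn.2 fun i j hij => beta_lt_beta hij j.2
  have hset : l.betaSet = (List.ofFn (fun i : Fin l.len => l.beta i)).toFinset := by
    ext x
    simp [mem_betaSet, List.mem_ofFn, Fin.exists_iff]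
  rw [hset, List.toFinset_sort _ (hsorted.imp ne_of_gt)]
  exact hsorted.imp le_of_lt

lemma betaSet_injective : Function.Injective betaSet := by
  intro l₁ l₂ h
  have hofFn := sort_betaSet (l := l₁)
  rw [h, sort_betaSet] at hofFn
  have hlen : l₂.len = l₁.len := by simpa using congrArg List.length hofFn
  have hbeta (i : ℕ) (hi : i < l₁.len) : l₂.beta i = l₁.beta i := by
    have := congrArg (·[i]?) hofFn
    simpa [List.getElem?_ofFn, hi, hlen ▸ hi] using this
  obtain ⟨p₁, _, _⟩ := l₁
  obtain ⟨p₂, _, _⟩ := l₂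
  simp only [mk.injEq]
  refine List.ext_getElem hlen.symm fun i h₁ h₂ => ?_
  have := hbeta i h₁
  simp only [beta, part, len, List.getD_eq_getElem _ _ h₁, List.getD_eq_getElem _ _ h₂] at this hlen
  omega

lemma colLen_eq_card (j : ℕ) : l.colLen j = #{i ∈ range l.len | j ≤ l.part i} := by
  simp [colLen, List.length_filter_eq_card, part, len]

lemma colLen_le_len (j : ℕ) : l.colLen j ≤ l.len := List.length_filter_le _ _

lemma lt_colLen {i j : ℕ} (hi : i < l.len) (hj : j ≤ l.part i) : i < l.colLen j := by
  rw [colLen_eq_card, Nat.lt_iff_add_one_le, ← card_range (i + 1)]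
  refine card_le_card fun k hk => ?_
  rw [mem_range] at hk
  exact mem_filter.2 ⟨mem_range.2 (by omega), hj.trans (part_le_part (by omega) hi)⟩

lemma colLen_le {k j : ℕ} (hj : l.part k < j) : l.colLen j ≤ k := by
  rw [colLen_eq_card, ← card_range k]
  refine card_le_card fun i hi => ?_
  rw [mem_filter, mem_range] at hi
  by_contra h
  have := part_le_part (not_lt.1 (mt mem_range.2 h)) hi.1
  omega

lemma colLen_anti {j j' : ℕ} (h : j ≤ j') : l.colLen j' ≤ l.colLen j := by
  rw [colLen_eq_card, colLen_eq_card]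
  exact card_le_card (monotone_filter_right _ fun _ _ hi => h.trans hi)

variable (l) in
/-- The position of column `j` on the boundary path of the diagram, on which the β-set records the
positions of the rows. -/
def colPos (j : ℕ) : ℕ := l.len - 1 + j - l.colLen j

lemma colPos_notMem_betaSet {j : ℕ} (hj : 1 ≤ j) : l.colPos j ∉ l.betaSet := by
  rw [mem_betaSet]
  rintro ⟨k, hk, hkj⟩
  have := colLen_le_len (l := l) j
  unfold colPos beta at *
  rcases le_or_gt j (l.part k) with h | h
  · have := lt_colLen hk h
    omega
  · have := colLen_le (l := l) h
    omega

lemma colPos_lt_colPos {j j' : ℕ} (hj : 1 ≤ j) (h : j < j') : l.colPos j < l.colPos j' := by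
  have := colLen_anti (l := l) h.le
  have := colLen_le_len (l := l) j
  unfold colPos
  omega

lemma hook_add_colPos {i j : ℕ} (hi : i < l.len) (hj₁ : 1 ≤ j) (hj₂ : j ≤ l.part i) :
    l.hook i j + l.colPos j = l.beta i := by
  have := lt_colLen hi hj₂
  have := colLen_le_len (l := l) j
  unfold hook colPos beta part at *
  omega

lemma hook_injOn {i : ℕ} (hi : i < l.len) : Set.InjOn (l.hook i) (Icc 1 (l.part i)) := by
  intro j hj j' hj' hjj'
  simp only [coe_Icc, Set.mem_Icc] at hj hj'
  have := hook_add_colPos hi hj.1 hj.2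
  have := hook_add_colPos hi hj'.1 hj'.2
  by_contra hne
  rcases Nat.lt_or_gt_of_ne hne with h | h
  · have := colPos_lt_colPos (l := l) hj.1 h
    omega
  · have := colPos_lt_colPos (l := l) hj'.1 h
    omega

lemma sub_le_card_filter_sub_mem {i : ℕ} (hi : i < l.len) :
    l.len - 1 - i ≤ #{h ∈ Icc 1 (l.beta i) | l.beta i - h ∈ l.betaSet} := by
  rw [show l.len - 1 - i = #(Ioo i l.len) by simp; omega,
    ← card_image_of_injOn (f := fun k => l.beta i - l.beta k)]
  · refine card_le_card fun h hh => ?_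
    obtain ⟨k, hk, rfl⟩ := mem_image.1 hh
    rw [mem_Ioo] at hk
    have := beta_lt_beta hk.1 hk.2
    refine mem_filter.2 ⟨mem_Icc.2 ⟨by omega, by omega⟩, ?_⟩
    rw [show l.beta i - (l.beta i - l.beta k) = l.beta k by omega]
    exact beta_mem_betaSet hk.2
  · intro k hk k' hk' hkk'
    simp only [coe_Ioo, Set.mem_Ioo] at hk hk' hkk'
    have := beta_lt_beta hk.1 hk.2
    have := beta_lt_beta hk'.1 hk'.2
    exact beta_injOn (mem_range.2 hk.2) (mem_range.2 hk'.2) (by omega)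

lemma image_hook {i : ℕ} (hi : i < l.len) :
    (Icc 1 (l.part i)).image (l.hook i) = {h ∈ Icc 1 (l.beta i) | l.beta i - h ∉ l.betaSet} := by
  refine eq_of_subset_of_card_le (fun h hh => ?_) ?_
  · obtain ⟨j, hj, rfl⟩ := mem_image.1 hh
    rw [mem_Icc] at hj
    have := hook_add_colPos hi hj.1 hj.2
    refine mem_filter.2 ⟨mem_Icc.2 ⟨by unfold hook; omega, by omega⟩, ?_⟩
    rw [show l.beta i - l.hook i j = l.colPos j by omega]
    exact colPos_notMem_betaSet hj.1
  · have := sub_le_card_filter_sub_mem hi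
    have := card_filter_add_card_filter_not (s := Icc 1 (l.beta i))
      (fun h => l.beta i - h ∈ l.betaSet)
    rw [card_image_of_injOn (hook_injOn hi), Nat.card_Icc] at *
    unfold beta at *
    omega

lemma isCore_iff {t : ℕ} : l.IsCore t ↔ ∀ x ∈ l.betaSet, t ≤ x → x - t ∈ l.betaSet := by
  constructor
  · intro hcore x hx htx
    by_contra hxt
    obtain ⟨i, hi, rfl⟩ := mem_betaSet.1 hx
    have ht : 1 ≤ t := Nat.one_le_iff_ne_zero.2 fun h => hxt (by simpa [h] using hx)
    have : t ∈ (Icc 1 (l.part i)).image (l.hook i) := by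
      rw [image_hook hi]
      exact mem_filter.2 ⟨mem_Icc.2 ⟨ht, htx⟩, hxt⟩
    obtain ⟨j, hj, hjt⟩ := mem_image.1 this
    rw [mem_Icc] at hj
    exact hcore i j hi hj.1 hj.2 (hjt ▸ dvd_refl t)
  · rintro hcl i j hi hj₁ hj₂ ⟨d, hd⟩
    have : l.hook i j ∈ (Icc 1 (l.part i)).image (l.hook i) :=
      mem_image_of_mem _ (mem_Icc.2 ⟨hj₁, hj₂⟩)
    rw [image_hook hi, mem_filter, mem_Icc, hd] at this
    exact this.2 (sub_mul_mem_of_sub_mem hcl (beta_mem_betaSet hi) d this.1.2)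

end Partn

section OfBetaSet

variable {B : Finset ℕ}

lemma getD_sort_mem {i : ℕ} (hi : i < #B) : (B.sort (· ≥ ·)).getD i 0 ∈ B := by
  rw [List.getD_eq_getElem _ _ (by simpa using hi), ← mem_sort (· ≥ ·)]
  exact List.getElem_mem _

lemma getD_sort_add_two_le (hB : ∀ x ∈ B, x + 1 ∉ B) {i : ℕ} (hi : i + 1 < #B) :
    (B.sort (· ≥ ·)).getD (i + 1) 0 + 2 ≤ (B.sort (· ≥ ·)).getD i 0 := by
  have hlt : (B.sort (· ≥ ·)).getD (i + 1) 0 < (B.sort (· ≥ ·)).getD i 0 := by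
    rw [List.getD_eq_getElem _ _ (by simpa using hi), List.getD_eq_getElem _ _ (by simp; omega)]
    exact (sortedGT_sort B).getElem_lt_getElem_iff.2 (Nat.lt_succ_self i)
  by_contra h
  have heq : (B.sort (· ≥ ·)).getD (i + 1) 0 + 1 = (B.sort (· ≥ ·)).getD i 0 := by omega
  exact hB _ (getD_sort_mem hi) (heq ▸ getD_sort_mem (by omega))

lemma sub_lt_getD_sort (h0 : 0 ∉ B) (hB : ∀ x ∈ B, x + 1 ∉ B) {i : ℕ} (hi : i < #B) :
    #B - 1 - i < (B.sort (· ≥ ·)).getD i 0 := by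
  suffices ∀ k < #B, 2 * k + 1 ≤ (B.sort (· ≥ ·)).getD (#B - 1 - k) 0 by
    have := this (#B - 1 - i) (by omega)
    rw [show #B - 1 - (#B - 1 - i) = i by omega] at this
    omega
  intro k hk
  induction k with
  | zero => exact Nat.pos_of_ne_zero fun h => h0 (h ▸ getD_sort_mem (by omega))
  | succ k ih =>
    have := getD_sort_add_two_le hB (i := #B - 1 - (k + 1)) (by omega)
    rw [show #B - 1 - (k + 1) + 1 = #B - 1 - k by omega] at this
    have := ih (by omega)
    omega

variable (B) in
def partsOfBetaSet : List ℕ := List.ofFn fun i : Fin #B => (B.sort (· ≥ ·)).getD i 0 - (#B - 1 - i)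

lemma pairwise_partsOfBetaSet (h0 : 0 ∉ B) (hB : ∀ x ∈ B, x + 1 ∉ B) :
    (partsOfBetaSet B).Pairwise (· > ·) := by
  rw [partsOfBetaSet, ← List.isChain_iff_pairwise, List.isChain_ofFn]
  intro i hi
  have := getD_sort_add_two_le hB hi
  have := sub_lt_getD_sort h0 hB hi
  simp only
  omega

lemma pos_of_mem_partsOfBetaSet (h0 : 0 ∉ B) (hB : ∀ x ∈ B, x + 1 ∉ B) :
    ∀ p ∈ partsOfBetaSet B, 0 < p := by
  simp only [partsOfBetaSet, List.mem_ofFn, forall_exists_index, forall_apply_eq_imp_iff]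
  intro i
  have := sub_lt_getD_sort h0 hB i.2
  omega

lemma Partn.exists_betaSet_eq (h0 : 0 ∉ B) (hB : ∀ x ∈ B, x + 1 ∉ B) :
    ∃ l : Partn, l.DistinctParts ∧ l.betaSet = B := by
  have hdist := pairwise_partsOfBetaSet h0 hB
  let l : Partn := ⟨partsOfBetaSet B, pos_of_mem_partsOfBetaSet h0 hB, hdist.imp le_of_lt⟩
  have hlen : l.len = #B := List.length_ofFn
  have hbeta (i : ℕ) (hi : i < #B) : l.beta i = (B.sort (· ≥ ·)).getD i 0 := by
    have hi' : i < (partsOfBetaSet B).length := by simpa [partsOfBetaSet] using hi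
    have := sub_lt_getD_sort h0 hB hi
    rw [Partn.beta, Partn.part, hlen]
    change (partsOfBetaSet B).getD i 0 + _ = _
    rw [List.getD_eq_getElem _ _ hi']
    simp only [partsOfBetaSet, List.getElem_ofFn]
    omega
  refine ⟨l, hdist, ?_⟩
  ext x
  rw [Partn.mem_betaSet, hlen]
  constructor
  · rintro ⟨i, hi, rfl⟩
    exact hbeta i hi ▸ getD_sort_mem hi
  · intro hx
    obtain ⟨i, hi, hix⟩ := List.mem_iff_getElem.1 ((mem_sort (· ≥ ·)).2 hx)
    rw [length_sort] at hi
    exact ⟨i, hi, by rw [hbeta i hi, List.getD_eq_getElem _ _ (by simpa using hi), hix]⟩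

end OfBetaSet

namespace Partn

variable {l : Partn}

lemma admissible_betaSet_iff {t m : ℕ} (ht : 0 < t) (hm : 0 < m) (hd : l.DistinctParts) :
    Admissible t m l.betaSet ↔ l.IsCore t ∧ l.IsCore (m * t - 1) := by
  refine ⟨fun hB => ⟨isCore_iff.2 hB.sub_mem, isCore_iff.2 fun x hx h => ?_⟩, fun ⟨ht', hs'⟩ => ?_⟩
  · have := hB.le x hx
    have := hB.pos x hx
    omega
  · have hsucc := fun x (hx : x ∈ l.betaSet) => succ_notMem_betaSet hd hx
    exact ⟨fun x hx => Nat.pos_of_ne_zero fun h => zero_notMem_betaSet (h ▸ hx),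
      fun x hx => le_sub_two_of_sub_mem ht hm zero_notMem_betaSet hsucc (isCore_iff.1 ht')
        (isCore_iff.1 hs') hx, hsucc, isCore_iff.1 ht'⟩

lemma isOptimal_betaSet {t m : ℕ} (ht : 0 < t) (hm : 0 < m)
    (hl : l.IsCore t ∧ l.IsCore (m * t - 1) ∧ l.DistinctParts)
    (hmax : ∀ μ : Partn, μ.IsCore t ∧ μ.IsCore (m * t - 1) ∧ μ.DistinctParts → μ.size ≤ l.size) :
    IsOptimal t m l.betaSet := by
  refine ⟨(admissible_betaSet_iff ht hm hl.2.2).2 ⟨hl.1, hl.2.1⟩, fun B hB => ?_⟩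
  obtain ⟨μ, hμ, rfl⟩ := exists_betaSet_eq hB.zero_notMem hB.succ_notMem
  have hcore := (admissible_betaSet_iff ht hm hμ).1 hB
  rw [twiceSize_betaSet, twiceSize_betaSet]
  exact_mod_cast Nat.mul_le_mul_left 2 (hmax μ ⟨hcore.1, hcore.2, hμ⟩)

end Partn

/-! ### Improving an admissible set -/

namespace Admissible

variable {t m : ℕ} {B : Finset ℕ}

lemma insert_add (hB : Admissible t m B) {z : ℕ} (hz : z ∈ B) (hle : z + t ≤ m * t - 2) :
    Admissible t m (insert (z + t) B) := by
  have hres : (z + t) % t ∈ B := by rw [Nat.add_mod_right]; exact hB.mod_mem hz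
  have hnext : z + t + 1 ∉ B := fun h =>
    succ_mod_notMem hB.zero_notMem hB.succ_notMem hres (hB.mod_mem h)
  refine ⟨?_, ?_, ?_, ?_⟩
  · simp only [mem_insert, forall_eq_or_imp]
    exact ⟨by have := hB.pos z hz; omega, hB.pos⟩
  · simp only [mem_insert, forall_eq_or_imp]
    exact ⟨hle, hB.le⟩
  · simp only [mem_insert, forall_eq_or_imp, not_or]
    refine ⟨⟨by omega, hnext⟩, fun x hx => ⟨fun h => ?_, hB.succ_notMem x hx⟩⟩
    exact succ_mod_notMem hB.zero_notMem hB.succ_notMem (hB.mod_mem hx) (h ▸ hres)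
  · simp only [mem_insert, forall_eq_or_imp]
    exact ⟨fun _ => by simp [hz], fun x hx htx => Or.inr (hB.sub_mem x hx htx)⟩

lemma erase (hB : Admissible t m B) {z : ℕ} (hz : z + t ∉ B) : Admissible t m (B.erase z) where
  pos x hx := hB.pos x (mem_of_mem_erase hx)
  le x hx := hB.le x (mem_of_mem_erase hx)
  succ_notMem x hx h := hB.succ_notMem x (mem_of_mem_erase hx) (mem_of_mem_erase h)
  sub_mem x hx htx := by
    have hxB := mem_of_mem_erase hx
    refine mem_erase.2 ⟨fun h => hz ?_, hB.sub_mem x hxB htx⟩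
    rwa [← h, Nat.sub_add_cancel htx]

end Admissible

def raiseClass (t r x : ℕ) : ℕ := if x % t = r then x + 1 else x

namespace Admissible

variable {t m : ℕ} {B : Finset ℕ}

lemma injOn_raiseClass (hB : Admissible t m B) (r : ℕ) : Set.InjOn (raiseClass t r) B := by
  intro x hx y hy hxy
  simp only [raiseClass] at hxy
  split_ifs at hxy
  · omega
  · exact absurd (hxy ▸ hy) (hB.succ_notMem x hx)
  · exact absurd (hxy ▸ hx) (hB.succ_notMem y hy)
  · exact hxy

lemma image_raiseClass (hB : Admissible t m B) {r : ℕ} (hrt : r + 3 ≤ t) (hr2 : r + 2 ∉ B) :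
    Admissible t m (B.image (raiseClass t r)) := by
  refine ⟨?_, ?_, ?_, ?_⟩ <;>
    simp only [mem_image, forall_exists_index, and_imp, forall_apply_eq_imp_iff₂, raiseClass]
  · intro x hx
    have := hB.pos x hx
    split_ifs <;> omega
  · intro x hx
    have hxle := hB.le x hx
    split_ifs with hxr
    · have hm : 0 < m := Nat.pos_of_ne_zero fun h => by have := hB.pos x hx; simp [h] at hxle; omega
      exact add_one_le_of_mod_add_three_le hm hxle (by omega)
    · exact hxle
  · rintro x hx ⟨x', hx', hxx'⟩
    by_cases hxr : x % t = r <;> by_cases hxr' : x' % t = r <;>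
      simp only [hxr, hxr', if_true, if_false] at hxx'
    · exact hB.succ_notMem x hx (by rwa [show x' = x + 1 by omega] at hx')
    · have h2 : x' % t = r + 2 :=
        mod_eq_of_eq_add_mul (q := x / t) (by have := Nat.mod_add_div x t; omega) (by omega)
      exact hr2 (h2 ▸ hB.mod_mem hx')
    · exact hxr (by rwa [show x = x' by omega])
    · exact hB.succ_notMem x hx (by rwa [← hxx'])
  · intro x hx hty
    by_cases hxr : x % t = r
    · rw [if_pos hxr] at hty
      have htx : t ≤ x := by
        by_contra h
        rw [Nat.mod_eq_of_lt (by omega)] at hxr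
        omega
      refine ⟨x - t, hB.sub_mem x hx htx, ?_⟩
      rw [← Nat.mod_eq_sub_mod htx, if_pos hxr, if_pos hxr]
      omega
    · rw [if_neg hxr] at hty
      refine ⟨x - t, hB.sub_mem x hx hty, ?_⟩
      rw [← Nat.mod_eq_sub_mod hty, if_neg hxr, if_neg hxr]

lemma twiceSize_lt_image_raiseClass (hB : Admissible t m B) {r : ℕ} (hr : r ∈ B) (hrt : r < t) :
    twiceSize B < twiceSize (B.image (raiseClass t r)) := by
  have hsum : ∑ x ∈ B, (x : ℤ) < ∑ x ∈ B, (raiseClass t r x : ℤ) := by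
    refine sum_lt_sum (fun x _ => ?_) ⟨r, hr, ?_⟩
    · unfold raiseClass
      split_ifs <;> push_cast <;> omega
    · simp [raiseClass, Nat.mod_eq_of_lt hrt]
  rw [twiceSize, twiceSize, card_image_of_injOn (hB.injOn_raiseClass r),
    sum_image (hB.injOn_raiseClass r)]
  linarith

end Admissible

namespace IsOptimal

variable {t m : ℕ} {B : Finset ℕ}

/-- Adding `z + t` and removing `z` change `twiceSize` by amounts summing to `2t - 2 > 0`. -/
lemma add_mem (ht : 2 ≤ t) (hB : IsOptimal t m B) {z : ℕ} (hz : z ∈ B)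
    (hle : z + t ≤ m * t - 2) : z + t ∈ B := by
  by_contra hzt
  have hins := hB.2 _ (hB.1.insert_add hz hle)
  have hers := hB.2 _ (hB.1.erase hzt)
  rw [twiceSize_insert hzt] at hins
  rw [twiceSize_erase hz] at hers
  push_cast at hins
  have : (2 : ℤ) ≤ t := by exact_mod_cast ht
  linarith

lemma mem_of_mod_mem (ht : 2 ≤ t) (hB : IsOptimal t m B) {x : ℕ} (hx : x % t ∈ B)
    (hle : x ≤ m * t - 2) : x ∈ B := by
  suffices ∀ q, x % t + t * q ≤ m * t - 2 → x % t + t * q ∈ B by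
    rw [← Nat.mod_add_div x t] at hle ⊢
    exact this _ hle
  intro q
  induction q with
  | zero => simpa using fun _ => hx
  | succ q ih =>
    rw [Nat.mul_succ, ← add_assoc]
    exact fun hle => hB.add_mem ht (ih (by omega)) hle

lemma add_two_mem (hB : IsOptimal t m B) {r : ℕ} (hr : r ∈ B) (hrt : r + 3 ≤ t) : r + 2 ∈ B := by
  by_contra h
  exact (hB.2 _ (hB.1.image_raiseClass hrt h)).not_gt
    (hB.1.twiceSize_lt_image_raiseClass hr (by omega))

lemma nonempty (ht : 2 ≤ t) (hm : 2 ≤ m) (hB : IsOptimal t m B) : B.Nonempty := by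
  rw [nonempty_iff_ne_empty]
  rintro rfl
  have : 4 ≤ m * t := Nat.mul_le_mul hm ht
  have h1 : Admissible t m {1} := ⟨by simp, by simp; omega, by simp, by simp; omega⟩
  have := hB.2 _ h1
  simp [twiceSize] at this

end IsOptimal

/-! ### The optimal configurations -/

def stack (t r h : ℕ) : Finset ℕ := (range h).image (fun j => r + t * j)

def band (t m : ℕ) (R : Finset ℕ) : Finset ℕ := (range (m * t - 1)).filter (fun x => x % t ∈ R)

def ladder (σ k : ℕ) : Finset ℕ := (range k).image (fun i => σ + 2 * i)

section Configurations

variable {t m : ℕ}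

lemma mem_stack {r h x : ℕ} : x ∈ stack t r h ↔ ∃ j < h, r + t * j = x := by
  simp [stack]

lemma card_stack (ht : 0 < t) (r h : ℕ) : #(stack t r h) = h := by
  rw [stack, card_image_of_injective _ fun i j hij => by simpa [ht.ne'] using hij, card_range]

lemma twiceSize_stack (ht : 0 < t) (r h : ℕ) :
    twiceSize (stack t r h) = 2 * h * r + (t - 1) * h * (h - 1 : ℤ) := by
  induction h with
  | zero => simp [twiceSize, stack]
  | succ h ih =>
    have hnot : r + t * h ∉ stack t r h := by
      simp [mem_stack, ht.ne']
    rw [stack, range_add_one, image_insert, ← stack, twiceSize_insert hnot, ih, card_stack ht]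
    push_cast
    ring

lemma mem_ladder {σ k r : ℕ} : r ∈ ladder σ k ↔ ∃ i < k, σ + 2 * i = r := by
  simp [ladder]

lemma ladder_succ (σ k : ℕ) : ladder σ (k + 1) = insert (σ + 2 * k) (ladder σ k) := by
  rw [ladder, range_add_one, image_insert, ← ladder]

lemma band_insert (r : ℕ) (R : Finset ℕ) : band t m (insert r R) = band t m R ∪ band t m {r} := by
  ext x
  simp [band, or_comm, and_or_left]

lemma disjoint_band {R R' : Finset ℕ} (h : Disjoint R R') : Disjoint (band t m R) (band t m R') :=
  disjoint_filter.2 fun _ _ hx hx' => disjoint_left.1 h hx hx'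

lemma band_singleton {r h : ℕ} (hr : r < t) (hh : ∀ j, r + t * j < m * t - 1 ↔ j < h) :
    band t m {r} = stack t r h := by
  ext x
  simp only [band, mem_filter, mem_range, mem_singleton, mem_stack]
  constructor
  · rintro ⟨hx, rfl⟩
    exact ⟨x / t, (hh _).1 (by rwa [Nat.mod_add_div]), Nat.mod_add_div x t⟩
  · rintro ⟨j, hj, rfl⟩
    exact ⟨(hh j).2 hj, mod_eq_of_eq_add_mul rfl hr⟩

lemma band_singleton_of_lt (hm : 0 < m) {r : ℕ} (hr : r + 2 ≤ t) : band t m {r} = stack t r m := by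
  refine band_singleton (by omega) fun j => ⟨fun h => ?_, fun h => ?_⟩
  · by_contra hj
    have := Nat.mul_le_mul_left t (not_lt.1 hj)
    rw [mul_comm m t] at h
    omega
  · have := Nat.mul_le_mul_left t (Nat.le_sub_one_of_lt h)
    have := Nat.le_mul_of_pos_right t hm
    rw [Nat.mul_sub_one, mul_comm m t] at *
    omega

lemma band_singleton_top (ht : 0 < t) : band t m {t - 1} = stack t (t - 1) (m - 1) := by
  refine band_singleton (by omega) fun j => ?_
  rw [show t - 1 + t * j = t * (j + 1) - 1 by rw [Nat.mul_succ]; omega, mul_comm m t]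
  constructor
  · intro h
    have : t * (j + 1) < t * m := by omega
    have := Nat.lt_of_mul_lt_mul_left this
    omega
  · intro h
    have := Nat.mul_le_mul_left t (show j + 1 ≤ m - 1 by omega)
    have := Nat.mul_le_mul_left t (show 1 ≤ j + 1 by omega)
    rw [Nat.mul_sub_one] at *
    omega

lemma admissible_band {R : Finset ℕ} (h0 : 0 ∉ R) (hR : ∀ r ∈ R, r + 1 ∉ R) :
    Admissible t m (band t m R) where
  pos x hx := Nat.pos_of_ne_zero fun h => h0 (by simpa [h] using (mem_filter.1 hx).2)
  le x hx := by have := (mem_filter.1 hx).1; rw [mem_range] at this; omega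
  succ_notMem x hx h := succ_mod_notMem h0 hR (mem_filter.1 hx).2 (mem_filter.1 h).2
  sub_mem x hx htx := by
    simp only [band, mem_filter, mem_range] at hx ⊢
    exact ⟨by omega, Nat.mod_eq_sub_mod htx ▸ hx.2⟩

lemma zero_notMem_ladder {σ : ℕ} (hσ : 0 < σ) (k : ℕ) : 0 ∉ ladder σ k := by
  simp [mem_ladder]; omega

lemma succ_notMem_ladder {σ k r : ℕ} (hr : r ∈ ladder σ k) : r + 1 ∉ ladder σ k := by
  simp only [mem_ladder] at hr ⊢
  omega

lemma admissible_band_ladder {σ : ℕ} (hσ : 0 < σ) (k : ℕ) :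
    Admissible t m (band t m (ladder σ k)) :=
  admissible_band (zero_notMem_ladder hσ k) fun _ => succ_notMem_ladder

lemma disjoint_band_ladder (σ k : ℕ) : Disjoint (band t m (ladder σ k)) (band t m {σ + 2 * k}) :=
  disjoint_band (disjoint_singleton_right.2 (by simp [mem_ladder]))

lemma card_band_ladder (ht : 0 < t) (hm : 0 < m) {σ k : ℕ} (h : σ + 2 * k ≤ t) :
    #(band t m (ladder σ k)) = m * k := by
  induction k with
  | zero => simp [ladder, band]
  | succ k ih =>
    rw [ladder_succ, band_insert, card_union_of_disjoint (disjoint_band_ladder σ k), ih (by omega),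
      band_singleton_of_lt hm (by omega), card_stack ht]
    ring

lemma twiceSize_band_ladder (ht : 0 < t) (hm : 0 < m) {σ k : ℕ} (h : σ + 2 * k ≤ t) :
    twiceSize (band t m (ladder σ k)) = m * k * (2 * σ + 2 * k + t * (m - 1) - m * k - 1 : ℤ) := by
  induction k with
  | zero => simp [ladder, band, twiceSize]
  | succ k ih =>
    rw [ladder_succ, band_insert, twiceSize_union (disjoint_band_ladder σ k), ih (by omega),
      card_band_ladder ht hm (by omega), band_singleton_of_lt hm (by omega), twiceSize_stack ht,
      card_stack ht]
    push_cast
    ring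

/-- `twiceSize` of an optimal set with `k` occupied residue classes. -/
def ladderValue (t m k : ℕ) : ℤ := m * k * (t * (m + 1) - k * (m + 2) - 1)

lemma twiceSize_band_ladder_of_add_eq (ht : 0 < t) (hm : 0 < m) {σ k : ℕ} (h : σ + 2 * k = t) :
    twiceSize (band t m (ladder σ k)) = ladderValue t m k := by
  rw [twiceSize_band_ladder ht hm h.le, ladderValue, ← h]
  push_cast
  ring

/-- When the top class is `t - 1`, it only has room for `m - 1` elements. -/
lemma twiceSize_band_ladder_of_add_eq_succ (ht : 0 < t) (hm : 0 < m) {σ k : ℕ} (hk : 0 < k)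
    (h : σ + 2 * k = t + 1) :
    twiceSize (band t m (ladder σ k)) = ladderValue t m k - 2 * m * (σ - 1) := by
  obtain ⟨k, rfl⟩ := Nat.exists_eq_add_of_lt hk
  rw [zero_add] at h ⊢
  have htop : σ + 2 * k = t - 1 := by omega
  rw [ladder_succ, band_insert, twiceSize_union (disjoint_band_ladder σ k),
    twiceSize_band_ladder ht hm (by omega), card_band_ladder ht hm (by omega), htop,
    band_singleton_top ht, twiceSize_stack ht, card_stack ht, ladderValue]
  have ht' : ((t - 1 : ℕ) : ℤ) = t - 1 := by omega
  have hm' : ((m - 1 : ℕ) : ℤ) = m - 1 := by omega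
  have ht'' : (t : ℤ) = σ + 2 * k + 1 := by omega
  rw [ht', hm', ht'']
  push_cast
  ring

lemma add_eq_of_ladderValue_eq (hm : 0 < m) {a b : ℕ} (h : ladderValue t m a = ladderValue t m b)
    (hab : a ≠ b) : (m + 2) * (a + b : ℤ) = t * (m + 1) - 1 := by
  have hsub : (m : ℤ) * (a - b) ≠ 0 :=
    mul_ne_zero (by exact_mod_cast hm.ne') (sub_ne_zero.2 (by exact_mod_cast hab))
  apply mul_left_cancel₀ hsub
  rw [ladderValue, ladderValue] at h
  linear_combination -h

end Configurations

lemma eq_ladder_min' {R : Finset ℕ} {t : ℕ} (hne : R.Nonempty) (hRt : ∀ r ∈ R, r < t)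
    (hR : ∀ r ∈ R, r + 1 ∉ R) (h2 : ∀ r ∈ R, r + 3 ≤ t → r + 2 ∈ R) :
    R = ladder (R.min' hne) ((t - R.min' hne + 1) / 2) := by
  set σ := R.min' hne
  have climb (i : ℕ) (hi : σ + 2 * i < t) : σ + 2 * i ∈ R := by
    induction i with
    | zero => exact R.min'_mem hne
    | succ i ih =>
      have := h2 _ (ih (by omega)) (by omega)
      rwa [show σ + 2 * i + 2 = σ + 2 * (i + 1) by ring] at this
  ext r
  rw [mem_ladder]
  constructor
  · intro hr
    have hσr : σ ≤ r := R.min'_le r hr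
    have hrt := hRt r hr
    rcases Nat.even_or_odd (r - σ) with ⟨i, hi⟩ | ⟨i, hi⟩
    · exact ⟨i, by omega, by omega⟩
    · exact absurd hr (show σ + 2 * i + 1 = r by omega ▸ hR _ (climb i (by omega)))
  · rintro ⟨i, hi, rfl⟩
    exact climb i (by omega)

/-! ### Classification of the optimal sets -/

namespace IsOptimal

variable {t m : ℕ} {B : Finset ℕ}

lemma eq_band (ht : 2 ≤ t) (hB : IsOptimal t m B) : B = band t m (B.filter (· < t)) := by
  ext x
  simp only [band, mem_filter, mem_range]
  refine ⟨fun hx => ⟨?_, hB.1.mod_mem hx, Nat.mod_lt x (by omega)⟩,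
    fun hx => hB.mem_of_mod_mem ht hx.2.1 (by omega)⟩
  have := hB.1.le x hx
  have := hB.1.pos x hx
  omega

/-- If the top occupied class is `t - 1`, the classes must reach down to `1`: otherwise moving every
class down by one (which frees room for one more element on top) is better. -/
lemma start_eq_one (hm : 0 < m) (hB : IsOptimal t m B) {σ k : ℕ} (hσ : 0 < σ) (hk : 0 < k)
    (hBeq : B = band t m (ladder σ k)) (h : σ + 2 * k = t + 1) : σ = 1 := by
  by_contra hσ1
  have ht : 0 < t := by omega
  have hle := hB.2 _ (admissible_band_ladder (σ := σ - 1) (by omega) k)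
  rw [twiceSize_band_ladder_of_add_eq ht hm (by omega), hBeq,
    twiceSize_band_ladder_of_add_eq_succ ht hm hk h] at hle
  have : (2 : ℤ) ≤ σ := by omega
  have : (0 : ℤ) < m := by exact_mod_cast hm
  nlinarith

theorem exists_eq_band_ladder (ht : 2 ≤ t) (hm : 2 ≤ m) (hB : IsOptimal t m B) :
    ∃ k, 0 < k ∧ 2 * k ≤ t ∧ B = band t m (ladder (max (t - 2 * k) 1) k) ∧
      twiceSize B = ladderValue t m k := by
  set R := B.filter (· < t)
  have hne : R.Nonempty := by
    obtain ⟨x, hx⟩ := hB.nonempty ht hm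
    exact ⟨x % t, mem_filter.2 ⟨hB.1.mod_mem hx, Nat.mod_lt x (by omega)⟩⟩
  have hRlad := eq_ladder_min' hne (fun r hr => (mem_filter.1 hr).2)
    (fun r hr h => hB.1.succ_notMem r (mem_filter.1 hr).1 (mem_filter.1 h).1)
    (fun r hr h3 => mem_filter.2 ⟨hB.add_two_mem (mem_filter.1 hr).1 h3, by omega⟩)
  set σ := R.min' hne
  have hσ : 0 < σ := hB.1.pos σ (mem_filter.1 (R.min'_mem hne)).1
  have hσt : σ < t := (mem_filter.1 (R.min'_mem hne)).2
  have hBeq : B = band t m (ladder σ ((t - σ + 1) / 2)) := by rw [← hRlad]; exact hB.eq_band ht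
  refine ⟨(t - σ + 1) / 2, by omega, by omega, ?_⟩
  rcases Nat.even_or_odd (t - σ) with ⟨i, hi⟩ | ⟨i, hi⟩
  · rw [show max (t - 2 * ((t - σ + 1) / 2)) 1 = σ by omega]
    exact ⟨hBeq, hBeq ▸ twiceSize_band_ladder_of_add_eq (by omega) (by omega) (by omega)⟩
  · have h1 := hB.start_eq_one (by omega) hσ (by omega) hBeq (by omega)
    rw [show max (t - 2 * ((t - σ + 1) / 2)) 1 = σ by omega]
    refine ⟨hBeq, ?_⟩
    rw [hBeq, twiceSize_band_ladder_of_add_eq_succ (by omega) (by omega) (by omega) (by omega), h1]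
    simp

/-- `ladderValue` is quadratic in the number of classes, so it takes its largest value at most
twice. -/
theorem eq_or_eq_or_eq (ht : 2 ≤ t) (hm : 2 ≤ m) {B₁ B₂ B₃ : Finset ℕ} (h₁ : IsOptimal t m B₁)
    (h₂ : IsOptimal t m B₂) (h₃ : IsOptimal t m B₃) : B₁ = B₂ ∨ B₁ = B₃ ∨ B₂ = B₃ := by
  obtain ⟨k₁, -, -, rfl, hv₁⟩ := h₁.exists_eq_band_ladder ht hm
  obtain ⟨k₂, -, -, rfl, hv₂⟩ := h₂.exists_eq_band_ladder ht hm
  obtain ⟨k₃, -, -, rfl, hv₃⟩ := h₃.exists_eq_band_ladder ht hm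
  by_contra! hne
  have hm0 : 0 < m := by omega
  have hk₁₂ : k₁ ≠ k₂ := by rintro rfl; exact hne.1 rfl
  have hk₁₃ : k₁ ≠ k₃ := by rintro rfl; exact hne.2.1 rfl
  have hk₂₃ : k₂ ≠ k₃ := by rintro rfl; exact hne.2.2 rfl
  have e₁₂ := add_eq_of_ladderValue_eq hm0
    (by rw [← hv₁, ← hv₂]; exact le_antisymm (h₂.2 _ h₁.1) (h₁.2 _ h₂.1)) hk₁₂
  have e₁₃ := add_eq_of_ladderValue_eq hm0
    (by rw [← hv₁, ← hv₃]; exact le_antisymm (h₃.2 _ h₁.1) (h₁.2 _ h₃.1)) hk₁₃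
  have : (k₂ : ℤ) = k₃ := by
    have : (0 : ℤ) < m + 2 := by positivity
    nlinarith
  exact hk₂₃ (by exact_mod_cast this)

end IsOptimal

/-- There are at most two `(t, mt−1)`-core partitions with distinct parts of maximal size. -/
theorem num_largest_t_mt_sub_one (t m : ℕ) (ht : 2 ≤ t) (hm : 2 ≤ m) :
    {lam : Partn | (lam.IsCore t ∧ lam.IsCore (m * t - 1) ∧ lam.DistinctParts) ∧
        ∀ mu : Partn, (mu.IsCore t ∧ mu.IsCore (m * t - 1) ∧ mu.DistinctParts) → mu.size ≤ lam.size}.ncard ≤ 2 := by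
  set S := {lam : Partn | (lam.IsCore t ∧ lam.IsCore (m * t - 1) ∧ lam.DistinctParts) ∧
    ∀ mu : Partn, (mu.IsCore t ∧ mu.IsCore (m * t - 1) ∧ mu.DistinctParts) → mu.size ≤ lam.size}
  have hopt (l : Partn) (hl : l ∈ S) : IsOptimal t m l.betaSet :=
    Partn.isOptimal_betaSet (by omega) (by omega) hl.1 hl.2
  by_contra! h
  obtain ⟨a, ha, b, hb, c, hc, hab, hac, hbc⟩ :=
    (Set.two_lt_ncard (Set.finite_of_ncard_pos (by omega))).1 h
  rcases (hopt a ha).eq_or_eq_or_eq ht hm (hopt b hb) (hopt c hc) with h | h | h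
  exacts [hab (Partn.betaSet_injective h), hac (Partn.betaSet_injective h),
    hbc (Partn.betaSet_injective h)]
end
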